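/- arXiv:2408.09059 — 6 statements merged into one kernel-verified Lean document; each statement's English description precedes it below -/
import Mathlib

section
/- If G is a planar graph, then the graph F(G) contains no clique on 4 vertices, i.e., ω(F(G)) ≤ 3. -/
open SimpleGraph

variable {V : Type*}

/-- Four distinct vertices forming a 4-cycle in `G`. -/
def IsC4 (G : SimpleGraph V) (a b c d : V) : Prop :=
  a ≠ b ∧ a ≠ c ∧ a ≠ d ∧ b ≠ c ∧ b ≠ d ∧ c ≠ d ∧
    G.Adj a b ∧ G.Adj b c ∧ G.Adj c d ∧ G.Adj d a

/-- A proper edge coloring of `G` in which every 4-cycle is rainbow. -/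
def IsBColoring (G : SimpleGraph V) {α : Type*} (C : Sym2 V → α) : Prop :=
  (∀ a b c : V, G.Adj a b → G.Adj a c → b ≠ c → C s(a, b) ≠ C s(a, c)) ∧
  (∀ a b c d : V, IsC4 G a b c d →
    C s(a, b) ≠ C s(b, c) ∧ C s(a, b) ≠ C s(c, d) ∧ C s(a, b) ≠ C s(d, a) ∧
    C s(b, c) ≠ C s(c, d) ∧ C s(b, c) ≠ C s(d, a) ∧ C s(c, d) ≠ C s(d, a))

/-- The minimum number of colors in a B-coloring of `G`. -/
noncomputable def qB (G : SimpleGraph V) : ℕ :=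
  sInf {n | ∃ C : Sym2 V → Fin n, IsBColoring G C}

/-- `e` and `f` are opposite edges of some 4-cycle of `G`. -/
def OppC4 (G : SimpleGraph V) (e f : Sym2 V) : Prop :=
  ∃ a b c d : V, IsC4 G a b c d ∧ e = s(a, b) ∧ f = s(c, d)

/-- Two edges (as unordered pairs) share no vertex. -/
def EdgeDisjoint (e f : Sym2 V) : Prop := ∀ v : V, v ∈ e → v ∉ f

/-- The graph `F(G)` on the edges of `G`: two vertex-disjoint edges are adjacent
iff they are opposite edges of a 4-cycle of `G`. -/
def Fgraph (G : SimpleGraph V) : SimpleGraph G.edgeSet :=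
  SimpleGraph.fromRel fun e f =>
    EdgeDisjoint (e : Sym2 V) (f : Sym2 V) ∧ OppC4 G (e : Sym2 V) (f : Sym2 V)

/-- The extended line graph `L⁺(G)`: edges of `G` are adjacent if they share an
endpoint or are opposite edges of a 4-cycle of `G`. -/
def Lplus (G : SimpleGraph V) : SimpleGraph G.edgeSet :=
  SimpleGraph.fromRel fun e f =>
    (∃ v : V, v ∈ (e : Sym2 V) ∧ v ∈ (f : Sym2 V)) ∨ OppC4 G (e : Sym2 V) (f : Sym2 V)

/-- `H` is a minor of `G`, via branch sets. -/
def HasMinor {W : Type*} (G : SimpleGraph V) (H : SimpleGraph W) : Prop :=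
  ∃ B : W → Set V,
    (∀ w, (G.induce (B w)).Connected) ∧
    (∀ w₁ w₂, w₁ ≠ w₂ → Disjoint (B w₁) (B w₂)) ∧
    (∀ w₁ w₂, H.Adj w₁ w₂ → ∃ v₁ ∈ B w₁, ∃ v₂ ∈ B w₂, G.Adj v₁ v₂)

/-- Planarity via Wagner's theorem: no `K₅` minor and no `K₃,₃` minor. -/
def IsPlanar (G : SimpleGraph V) : Prop :=
  ¬ HasMinor G (completeGraph (Fin 5)) ∧
    ¬ HasMinor G (completeBipartiteGraph (Fin 3) (Fin 3))

/-- Outerplanarity: no `K₄` minor and no `K₂,₃` minor. -/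
def IsOuterplanar (G : SimpleGraph V) : Prop :=
  ¬ HasMinor G (completeGraph (Fin 4)) ∧
    ¬ HasMinor G (completeBipartiteGraph (Fin 2) (Fin 3))

/-- `G` is 2-connected: at least 3 vertices and removing any vertex leaves it connected. -/
def IsTwoConnected (G : SimpleGraph V) : Prop :=
  3 ≤ Nat.card V ∧ ∀ v : V, (G.induce {u | u ≠ v}).Connected

/-- `K₄` minus one edge, on `Fin 4` (the edge between `2` and `3` removed). -/
def K4e : SimpleGraph (Fin 4) :=
  SimpleGraph.fromRel fun x y => s(x, y) ≠ s((2 : Fin 4), (3 : Fin 4))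

/-- The chromatic index: minimum number of colors in a proper edge coloring. -/
noncomputable def chromIndex (G : SimpleGraph V) : ℕ :=
  sInf {n | ∃ C : Sym2 V → Fin n,
    ∀ a b c : V, G.Adj a b → G.Adj a c → b ≠ c → C s(a, b) ≠ C s(a, c)}

/-- `K₆` minus a perfect matching, on `Fin 6` (the matching `01, 23, 45` removed). -/
def K6mM : SimpleGraph (Fin 6) :=
  SimpleGraph.fromRel fun x y => (x : ℕ) / 2 ≠ (y : ℕ) / 2

/-- A path `v₀v₁v₂v₃` together with a vertex `4` adjacent to all four path vertices. -/
def FanGraph : SimpleGraph (Fin 5) :=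
  SimpleGraph.fromRel fun x y =>
    ((x : ℕ) + 1 = (y : ℕ) ∧ (y : ℕ) ≤ 3) ∨ (x : ℕ) = 4

/-!
Edges that are pairwise adjacent in `F(G)` are pairwise vertex-disjoint, and any two of them are
opposite sides of a 4-cycle, so every endpoint of one is adjacent to an endpoint of the other.
Given `n + 1` such edges, contract the first `n` of them and keep the two endpoints of the last one
apart: the resulting `n + 2` branch sets form a `K_{n+2}` minor. For `n = 3` this is a `K₅` minor,
which a planar graph does not have.
-/

theorem OppC4.symm {G : SimpleGraph V} {e f : Sym2 V} (h : OppC4 G e f) : OppC4 G f e := by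
  obtain ⟨a, b, c, d, ⟨hab, hac, had, hbc, hbd, hcd, h₁, h₂, h₃, h₄⟩, rfl, rfl⟩ := h
  exact ⟨c, d, a, b, ⟨hcd, hac.symm, hbc.symm, had.symm, hbd.symm, hab, h₃, h₄, h₁, h₂⟩, rfl, rfl⟩

theorem OppC4.exists_adj {G : SimpleGraph V} {e f : Sym2 V} (h : OppC4 G e f) {v : V}
    (hv : v ∈ e) : ∃ w ∈ f, G.Adj v w := by
  obtain ⟨a, b, c, d, ⟨-, -, -, -, -, -, -, hbc, -, hda⟩, rfl, rfl⟩ := h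
  rcases Sym2.mem_iff.mp hv with rfl | rfl
  · exact ⟨d, Sym2.mem_mk_right c d, hda.symm⟩
  · exact ⟨c, Sym2.mem_mk_left c d, hbc⟩

theorem EdgeDisjoint.symm {e f : Sym2 V} (h : EdgeDisjoint e f) : EdgeDisjoint f e :=
  fun v hvf hve => h v hve hvf

theorem Fgraph_adj {G : SimpleGraph V} {e f : G.edgeSet} :
    (Fgraph G).Adj e f ↔ EdgeDisjoint (e : Sym2 V) f ∧ OppC4 G e f := by
  refine ⟨fun h => ?_, fun h => (fromRel_adj _ _ _).mpr ⟨?_, Or.inl h⟩⟩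
  · rcases ((fromRel_adj _ _ _).mp h).2 with h | ⟨hd, ho⟩
    · exact h
    · exact ⟨hd.symm, ho.symm⟩
  · rintro rfl
    exact h.1 _ (Sym2.out_fst_mem _) (Sym2.out_fst_mem _)

theorem connected_induce_of_mem_edgeSet {G : SimpleGraph V} {e : Sym2 V} (he : e ∈ G.edgeSet) :
    (G.induce {v | v ∈ e}).Connected := by
  induction e using Sym2.ind with
  | _ x y =>
    have hxy : {v | v ∈ s(x, y)} = {x, y} := by ext; simp
    rw [hxy]
    exact induce_pair_connected_of_adj he

theorem HasMinor.of_isContained {W W' : Type*} {G : SimpleGraph V} {H : SimpleGraph W}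
    {H' : SimpleGraph W'} (h : HasMinor G H) (hH : H' ⊑ H) : HasMinor G H' := by
  obtain ⟨B, hconn, hdisj, hadj⟩ := h
  obtain ⟨φ⟩ := hH
  exact ⟨B ∘ φ, fun w => hconn _, fun w₁ w₂ hne => hdisj _ _ (φ.injective.ne hne),
    fun w₁ w₂ ha => hadj _ _ (φ.toHom.map_adj ha)⟩

theorem hasMinor_completeGraph_sum_fin_two_of_Fgraph_clique {ι : Type*} {G : SimpleGraph V} (f : ι → G.edgeSet)
    (d : G.edgeSet) (hf : Pairwise fun i j => (Fgraph G).Adj (f i) (f j))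
    (hd : ∀ i, (Fgraph G).Adj (f i) d) : HasMinor G (completeGraph (ι ⊕ Fin 2)) := by
  obtain ⟨d, hd_edge⟩ := d
  induction d using Sym2.ind with
  | _ x y => ?_
  have hf' : Pairwise fun i j => EdgeDisjoint (f i : Sym2 V) (f j) ∧ OppC4 G (f i) (f j) :=
    fun i j hij => Fgraph_adj.mp (hf hij)
  have hd' : ∀ i, EdgeDisjoint (f i : Sym2 V) s(x, y) ∧ OppC4 G (f i) s(x, y) :=
    fun i => Fgraph_adj.mp (hd i)
  set p : Fin 2 → V := ![x, y]
  have hp_mem : ∀ j, p j ∈ s(x, y) := by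
    intro j; fin_cases j <;> simp [p]
  have hp_adj : ∀ j k, j ≠ k → G.Adj (p j) (p k) := by
    have hxy : G.Adj x y := hd_edge
    intro j k hjk
    fin_cases j <;> fin_cases k
    exacts [absurd rfl hjk, hxy, hxy.symm, absurd rfl hjk]
  refine ⟨Sum.elim (fun i => {v | v ∈ (f i : Sym2 V)}) (fun j => {p j}), ?_, ?_, ?_⟩
  · rintro (i | j)
    · exact connected_induce_of_mem_edgeSet (f i).2
    · simp
  · rintro (i | j) (i' | j') hne <;> simp only [ne_eq, Sum.inl.injEq, Sum.inr.injEq] at hne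
    · exact Set.disjoint_left.mpr (hf' hne).1
    · exact Set.disjoint_singleton_right.mpr fun h => (hd' i).1 _ h (hp_mem j')
    · exact Set.disjoint_singleton_left.mpr fun h => (hd' i').1 _ h (hp_mem j)
    · exact Set.disjoint_singleton.mpr (hp_adj j j' hne).ne
  · rintro (i | j) (i' | j') hne <;> simp only [top_adj, ne_eq, Sum.inl.injEq, Sum.inr.injEq] at hne
    · obtain ⟨w, hw, hadj⟩ := (hf' hne).2.exists_adj (Sym2.out_fst_mem _)
      exact ⟨_, Sym2.out_fst_mem _, w, hw, hadj⟩
    · obtain ⟨w, hw, hadj⟩ := (hd' i).2.symm.exists_adj (hp_mem j')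
      exact ⟨w, hw, p j', rfl, hadj.symm⟩
    · obtain ⟨w, hw, hadj⟩ := (hd' i').2.symm.exists_adj (hp_mem j)
      exact ⟨p j, rfl, w, hw, hadj⟩
    · exact ⟨p j, rfl, p j', rfl, hp_adj j j' hne⟩

theorem Fgraph_cliqueFree_of_not_hasMinor {G : SimpleGraph V} {n : ℕ}
    (hG : ¬ HasMinor G (completeGraph (Fin (n + 2)))) : (Fgraph G).CliqueFree (n + 1) := by
  by_contra h
  obtain ⟨f⟩ := (not_cliqueFree_iff_top_isContained _).mp h
  refine hG (HasMinor.of_isContained (hasMinor_completeGraph_sum_fin_two_of_Fgraph_clique (fun i => f i.castSucc)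
    (f (Fin.last n)) (fun i j hij => f.toHom.map_adj ?_) (fun i => f.toHom.map_adj ?_))
    ⟨(Iso.completeGraph finSumFinEquiv.symm).toCopy⟩)
  · exact Fin.castSucc_injective n |>.ne hij
  · exact (Fin.castSucc_lt_last i).ne

theorem Fgraph_cliqueFree_of_planar_general {V : Type*} (G : SimpleGraph V)
    (hG : IsPlanar G) : (Fgraph G).CliqueFree 4 :=
  Fgraph_cliqueFree_of_not_hasMinor hG.1

theorem Fgraph_cliqueFree_of_planar {V : Type*} [Fintype V] (G : SimpleGraph V)
    (hG : IsPlanar G) : (Fgraph G).CliqueFree 4 :=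
  Fgraph_cliqueFree_of_planar_general G hG
end

section
/- Let G be a planar graph and let H be a subgraph of F(G) whose vertices x_1, …, x_k (k ≥ 2) correspond to k pairwise vertex-disjoint edges of G. Then G contains a subgraph isomorphic to H □ K_2 in which each x_i corresponds to an edge between the two copies of H. -/
open SimpleGraph

variable {V : Type*}

/-!
Write each edge `e i` as an oriented edge `(i, s)`, `s : Bool`. A 4-cycle through `e i` and `e j`
makes some pair of orientations compatible (tails adjacent, heads adjacent), and compatibility
is preserved by reversing both edges. An orientation compatible along every edge of `H` exists
unless the orientations forced along `H` lead from some oriented edge `x` to its reversal. A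
shortest such forcing walk `x = x₀, …, xₙ = rev x` visits distinct edges, and the tails of
`x₀, …, xₙ₋₁` followed by their heads form a Möbius ladder with `n ≥ 3` rungs in `G`. A Möbius
ladder with at least three rungs has a `K₃,₃` minor, so this cannot happen in a planar graph.
-/

theorem OppC4.adj_and_adj_or {G : SimpleGraph V} {a a' b b' : V}
    (h : OppC4 G s(a, a') s(b, b')) :
    (G.Adj a b ∧ G.Adj a' b') ∨ (G.Adj a b' ∧ G.Adj a' b) := by
  obtain ⟨c₁, c₂, c₃, c₄, ⟨-, -, -, -, -, -, -, h₂₃, -, h₄₁⟩, ha, hb⟩ := h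
  rw [Sym2.eq_iff] at ha hb
  rcases ha with ⟨rfl, rfl⟩ | ⟨rfl, rfl⟩ <;> rcases hb with ⟨rfl, rfl⟩ | ⟨rfl, rfl⟩
  · exact .inr ⟨h₄₁.symm, h₂₃⟩
  · exact .inl ⟨h₄₁.symm, h₂₃⟩
  · exact .inl ⟨h₂₃, h₄₁.symm⟩
  · exact .inr ⟨h₂₃, h₄₁.symm⟩

namespace SimpleGraph

variable {W : Type*} (G : SimpleGraph W)

theorem connected_induce_image_Icc {c : ℕ → W} {a b : ℕ} (hab : a ≤ b)
    (hc : ∀ l, a ≤ l → l < b → G.Adj (c l) (c (l + 1))) :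
    (G.induce (c '' Set.Icc a b)).Connected := by
  have hmem : ∀ l ∈ Set.Icc a b, c l ∈ c '' Set.Icc a b := fun l hl => ⟨l, hl, rfl⟩
  have hreach : ∀ l (hl : l ∈ Set.Icc a b), (G.induce (c '' Set.Icc a b)).Reachable
      ⟨c a, hmem a ⟨le_rfl, hab⟩⟩ ⟨c l, hmem l hl⟩ := by
    rintro l ⟨hal, hlb⟩
    induction l, hal using Nat.le_induction with
    | base => rfl
    | succ m ham ih => exact (ih (by omega)).trans (Adj.reachable (hc m ham (by omega)))
  have : Nonempty (c '' Set.Icc a b) := ⟨⟨c a, hmem a ⟨le_rfl, hab⟩⟩⟩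
  refine ⟨?_⟩
  rintro ⟨_, l, hl, rfl⟩ ⟨_, m, hm, rfl⟩
  exact (hreach l hl).symm.trans (hreach m hm)

theorem hasMinor_of_Icc_branchSets {X : Type*} {F : SimpleGraph X} {c : ℕ → W} {N : ℕ}
    (lo hi : X → ℕ) (hinj : Set.InjOn c (Set.Iio N)) (hlohi : ∀ x, lo x ≤ hi x ∧ hi x < N)
    (hsep : ∀ x y, x ≠ y → hi x < lo y ∨ hi y < lo x)
    (hpath : ∀ x l, lo x ≤ l → l < hi x → G.Adj (c l) (c (l + 1)))
    (hcross : ∀ x y, F.Adj x y →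
      ∃ l₁ ∈ Set.Icc (lo x) (hi x), ∃ l₂ ∈ Set.Icc (lo y) (hi y), G.Adj (c l₁) (c l₂)) :
    HasMinor G F := by
  have hsub (x) : Set.Icc (lo x) (hi x) ⊆ Set.Iio N :=
    fun _ hl => lt_of_le_of_lt hl.2 (hlohi x).2
  refine ⟨fun x => c '' Set.Icc (lo x) (hi x), fun x => ?_, fun x y hne => ?_, fun x y hxy => ?_⟩
  · exact G.connected_induce_image_Icc (hlohi x).1 (hpath x)
  · refine Disjoint.image (Set.disjoint_left.2 fun l h₁ h₂ => ?_) hinj (hsub x) (hsub y)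
    rw [Set.mem_Icc] at h₁ h₂
    have := hsep x y hne
    omega
  · obtain ⟨l₁, h₁, l₂, h₂, hadj⟩ := hcross x y hxy
    exact ⟨c l₁, ⟨l₁, h₁, rfl⟩, c l₂, ⟨l₂, h₂, rfl⟩, hadj⟩

/-- The cycle `c 0, …, c (2n - 1)` with the chords `c l — c (l + n)` is the Möbius ladder with
`n` rungs. The branch sets are `{c 0}, {c (n+1)}, c '' [2, n-1]` on one side and
`{c n}, {c 1}, c '' [n+2, 2n-1]` on the other. -/
theorem hasMinor_K33_of_moebiusLadder {n : ℕ} (hn : 3 ≤ n) {c : ℕ → W}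
    (hinj : Set.InjOn c (Set.Iio (2 * n)))
    (hrim : ∀ l < 2 * n, G.Adj (c l) (c (l + 1))) (hclosed : c (2 * n) = c 0)
    (hrung : ∀ l < n, G.Adj (c l) (c (l + n))) :
    HasMinor G (completeBipartiteGraph (Fin 3) (Fin 3)) := by
  let lo : Fin 3 ⊕ Fin 3 → ℕ := Sum.elim ![0, n + 1, 2] ![n, 1, n + 2]
  let hi : Fin 3 ⊕ Fin 3 → ℕ := Sum.elim ![0, n + 1, n - 1] ![n, 1, 2 * n - 1]
  have hlohi : ∀ w, lo w ≤ hi w ∧ hi w < 2 * n := by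
    rintro (w | w) <;> fin_cases w <;> simp [lo, hi] <;> omega
  have hcross : ∀ x y : Fin 3, ∃ l₁ ∈ Set.Icc (lo (.inl x)) (hi (.inl x)),
      ∃ l₂ ∈ Set.Icc (lo (.inr y)) (hi (.inr y)), G.Adj (c l₁) (c l₂) := by
    have hlast : G.Adj (c 0) (c (2 * n - 1)) := by
      simpa [show 2 * n - 1 + 1 = 2 * n by omega, hclosed] using
        (hrim (2 * n - 1) (by omega)).symm
    have hmid : G.Adj (c (n - 1)) (c n) := by
      simpa [show n - 1 + 1 = n by omega] using hrim (n - 1) (by omega)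
    intro x y
    fin_cases x <;> fin_cases y
    · refine ⟨0, ?_, n, ?_, by simpa using hrung 0 (by omega)⟩ <;> simp [lo, hi]
    · refine ⟨0, ?_, 1, ?_, hrim 0 (by omega)⟩ <;> simp [lo, hi]
    · refine ⟨0, ?_, 2 * n - 1, ?_, hlast⟩ <;> simp [lo, hi]
      omega
    · refine ⟨n + 1, ?_, n, ?_, (hrim n (by omega)).symm⟩ <;> simp [lo, hi]
    · refine ⟨n + 1, ?_, 1, ?_, by simpa [add_comm] using (hrung 1 (by omega)).symm⟩ <;>
        simp [lo, hi]
    · refine ⟨n + 1, ?_, n + 2, ?_, hrim (n + 1) (by omega)⟩ <;> simp [lo, hi]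
      omega
    · refine ⟨n - 1, ?_, n, ?_, hmid⟩ <;> simp [lo, hi]
      omega
    · refine ⟨2, ?_, 1, ?_, (hrim 1 (by omega)).symm⟩ <;> simp [lo, hi]
      omega
    · refine ⟨2, ?_, n + 2, ?_, by simpa [add_comm] using hrung 2 (by omega)⟩ <;>
        simp [lo, hi] <;> omega
  refine G.hasMinor_of_Icc_branchSets lo hi hinj hlohi ?_
    (fun w l _ hl => hrim l (by have := (hlohi w).2; omega)) ?_
  · rintro (w₁ | w₁) (w₂ | w₂) <;> fin_cases w₁ <;> fin_cases w₂ <;> simp [lo, hi] <;> omega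
  · rintro (x | x) (y | y) hxy
    · simp at hxy
    · exact hcross x y
    · obtain ⟨l₁, h₁, l₂, h₂, hadj⟩ := hcross y x
      exact ⟨l₂, h₂, l₁, h₁, hadj.symm⟩
    · simp at hxy

end SimpleGraph

namespace OrientedEdge

variable {W ι : Type*}

def rev (x : ι × Bool) : ι × Bool := (x.1, !x.2)

@[simp] lemma rev_rev (x : ι × Bool) : rev (rev x) = x := by simp [rev]

@[simp] lemma fst_rev (x : ι × Bool) : (rev x).1 = x.1 := rfl

lemma rev_ne (x : ι × Bool) : rev x ≠ x := by simp [rev, Prod.ext_iff]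

lemma eq_or_eq_rev {x y : ι × Bool} (h : x.1 = y.1) : x = y ∨ x = rev y := by
  obtain ⟨i, s⟩ := x
  obtain ⟨j, t⟩ := y
  cases s <;> cases t <;> simp_all [rev]

lemma injOn_ite_rev {γ : ℕ → ι × Bool} {n : ℕ}
    (hinj : Set.InjOn (fun l => (γ l).1) (Set.Iio n)) :
    Set.InjOn (fun l => if l < n then γ l else rev (γ (l - n))) (Set.Iio (2 * n)) := by
  have hfst (a b) (ha : a < n) (hb : b < n) (h : (γ a).1 = (γ b).1) : a = b := hinj ha hb h
  intro a ha b hb hab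
  simp only [Set.mem_Iio] at ha hb
  dsimp only at hab
  split_ifs at hab with h₁ h₂ h₂
  · exact hfst a b h₁ h₂ (congrArg Prod.fst hab)
  · cases hfst a (b - n) h₁ (by omega) (by simpa using congrArg Prod.fst hab)
    exact absurd hab.symm (rev_ne _)
  · cases hfst (a - n) b (by omega) h₂ (by simpa using congrArg Prod.fst hab)
    exact absurd hab (rev_ne _)
  · have := hfst (a - n) (b - n) (by omega) (by omega) (by simpa using congrArg Prod.fst hab)
    omega

theorem injective_sum_elim {p : ι × Bool → W} (hp : Function.Injective p) (σ : ι → Bool) :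
    Function.Injective (Sum.elim (fun i => p (i, σ i)) (fun i => p (rev (i, σ i)))) := by
  rintro (i | i) (j | j) h <;> obtain ⟨rfl, hσ⟩ := Prod.mk.inj (hp h)
  · rfl
  · exact absurd hσ (Bool.eq_not_self _).1
  · exact absurd hσ (Bool.not_eq_self _).1
  · rfl

section Compatible

variable (G : SimpleGraph W) (p : ι × Bool → W)

/-- `p x` is the tail of the oriented edge `x`, so `p (rev x)` is its head. -/
def Compatible (x y : ι × Bool) : Prop :=
  G.Adj (p x) (p y) ∧ G.Adj (p (rev x)) (p (rev y))

variable {G p}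

lemma compatible_comm {x y : ι × Bool} : Compatible G p x y ↔ Compatible G p y x :=
  and_congr (G.adj_comm _ _) (G.adj_comm _ _)

lemma compatible_rev_left {x y : ι × Bool} :
    Compatible G p (rev x) y ↔ Compatible G p x (rev y) := by
  simp only [Compatible, rev_rev, and_comm]

variable (G p) (H : SimpleGraph ι)

def forcingGraph : SimpleGraph (ι × Bool) where
  Adj x y := H.Adj x.1 y.1 ∧ Compatible G p x y ∧ ¬ Compatible G p x (rev y)
  symm := ⟨fun _ _ h => ⟨h.1.symm, compatible_comm.1 h.2.1,
    by rw [compatible_comm, compatible_rev_left]; exact h.2.2⟩⟩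
  loopless := ⟨fun _ h => H.loopless.irrefl _ h.1⟩

variable {G p H}

lemma forcingGraph_adj_rev {x y : ι × Bool} :
    (forcingGraph G p H).Adj (rev x) (rev y) ↔ (forcingGraph G p H).Adj x y := by
  simp only [forcingGraph, fst_rev, compatible_rev_left, rev_rev]

lemma not_forcingGraph_adj_rev {x y : ι × Bool} (h : (forcingGraph G p H).Adj x y) :
    ¬ (forcingGraph G p H).Adj x (rev y) :=
  fun h' => h.2.2 h'.2.1

theorem exists_compatible_orientation
    (hext : ∀ x y, H.Adj x.1 y.1 → Compatible G p x y ∨ Compatible G p x (rev y))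
    (hbal : ∀ x, ¬ (forcingGraph G p H).Reachable x (rev x)) :
    ∃ σ : ι → Bool, ∀ i j, H.Adj i j → Compatible G p (i, σ i) (j, σ j) := by
  set D := forcingGraph G p H
  let : LinearOrder D.ConnectedComponent := WellOrderingRel.isWellOrder.linearOrder
  -- `sel` chooses one of each pair of components exchanged by `rev`.
  let sel (x : ι × Bool) : Prop := D.connectedComponentMk x < D.connectedComponentMk (rev x)
  have sel_rev (x) : sel (rev x) ↔ ¬ sel x := by
    have hne : D.connectedComponentMk x ≠ D.connectedComponentMk (rev x) :=
      fun h => hbal x (ConnectedComponent.exact h)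
    simp only [sel, rev_rev, not_lt]
    exact ⟨le_of_lt, fun h => lt_of_le_of_ne h hne.symm⟩
  have sel_of_adj {x y} (h : D.Adj x y) (hx : sel x) : sel y := by
    have hy : D.connectedComponentMk x = D.connectedComponentMk y :=
      ConnectedComponent.sound h.reachable
    have hry : D.connectedComponentMk (rev x) = D.connectedComponentMk (rev y) :=
      ConnectedComponent.sound (forcingGraph_adj_rev.2 h).reachable
    simpa only [sel, hy, hry] using hx
  have hσ : ∀ i, ∃ s, sel (i, s) := fun i => by
    by_cases h : sel (i, true)
    · exact ⟨true, h⟩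
    · exact ⟨false, (sel_rev (i, true)).2 h⟩
  choose σ hσ using hσ
  refine ⟨σ, fun i j hij => by_contra fun hnc => ?_⟩
  have hrev := (hext (i, σ i) (j, σ j) hij).resolve_left hnc
  have hforce : D.Adj (i, σ i) (rev (j, σ j)) := ⟨hij, hrev, by rwa [rev_rev]⟩
  exact (sel_rev (j, σ j)).1 (sel_of_adj hforce (hσ i)) (hσ j)

end Compatible

theorem exists_walk_to_rev_injOn_fst {D : SimpleGraph (ι × Bool)} {x : ι × Bool}
    (h : D.Reachable x (rev x)) :
    ∃ y, ∃ w : D.Walk y (rev y), Set.InjOn (fun l => (w.getVert l).1) (Set.Iio w.length) := by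
  classical
  have hP : ∃ n, ∃ y, ∃ w : D.Walk y (rev y), w.length = n := ⟨_, x, h.some, rfl⟩
  obtain ⟨y, w, hw⟩ := Nat.find_spec hP
  have hmin (z) (w' : D.Walk z (rev z)) : w.length ≤ w'.length :=
    hw ▸ Nat.find_min' hP ⟨z, w', rfl⟩
  refine ⟨y, w, ?_⟩
  suffices ∀ a b, a < b → b < w.length → (w.getVert a).1 ≠ (w.getVert b).1 by
    intro a ha b hb hab
    by_contra hne
    rcases lt_or_gt_of_ne hne with h | h
    · exact this a b h hb hab
    · exact this b a h ha hab.symm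
  intro a b hab hb heq
  rcases eq_or_eq_rev heq.symm with hba | hba
  · have := hmin y ((w.take a).append ((w.drop b).copy hba rfl))
    simp only [Walk.length_append, Walk.take_length, Walk.length_copy, Walk.drop_length] at this
    omega
  · have := hmin _ (((w.drop a).take (b - a)).copy rfl
      (by rw [Walk.drop_getVert, show a + (b - a) = b by omega, hba]))
    simp only [Walk.length_copy, Walk.take_length, Walk.drop_length] at this
    omega

section Ladder

variable {G : SimpleGraph W} {p : ι × Bool → W} {H : SimpleGraph ι}

lemma three_le_length_walk_to_rev {x : ι × Bool} (w : (forcingGraph G p H).Walk x (rev x)) :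
    3 ≤ w.length := by
  by_contra! hlt
  have h0 := w.getVert_zero
  have hn := w.getVert_length
  interval_cases hlen : w.length
  · exact rev_ne x (hn.symm.trans h0)
  · have h01 := w.adj_getVert_succ (i := 0) (by omega)
    rw [h0, zero_add, hn] at h01
    exact H.loopless.irrefl _ h01.1
  · have h01 := w.adj_getVert_succ (i := 0) (by omega)
    have h12 := w.adj_getVert_succ (i := 1) (by omega)
    rw [h0] at h01
    rw [hn] at h12
    exact not_forcingGraph_adj_rev h01 (forcingGraph_adj_rev.1 (by simpa using h12.symm))

theorem hasMinor_K33_of_reachable_rev (hp : Function.Injective p)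
    (hrung : ∀ x, G.Adj (p x) (p (rev x))) {x : ι × Bool}
    (hx : (forcingGraph G p H).Reachable x (rev x)) :
    HasMinor G (completeBipartiteGraph (Fin 3) (Fin 3)) := by
  obtain ⟨y, w, hinj⟩ := exists_walk_to_rev_injOn_fst hx
  set n := w.length
  have hn := three_le_length_walk_to_rev w
  have hstep (l) (hl : l < n) : Compatible G p (w.getVert l) (w.getVert (l + 1)) :=
    (w.adj_getVert_succ hl).2.1
  have hend : w.getVert n = rev (w.getVert 0) := by rw [w.getVert_length, w.getVert_zero]
  -- The rim runs through the tails of `x₀, …, xₙ₋₁`, then through their heads.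
  let δ (l : ℕ) : ι × Bool := if l < n then w.getVert l else rev (w.getVert (l - n))
  refine G.hasMinor_K33_of_moebiusLadder hn (c := p ∘ δ) (hp.comp_injOn (injOn_ite_rev hinj))
    (fun l hl => ?_) ?_ (fun l hl => ?_)
  · simp only [Function.comp_apply, δ]
    split_ifs with h₁ h₂ h₂
    · exact (hstep l h₁).1
    · rw [show l + 1 - n = 0 by omega, ← hend, ← show l + 1 = n by omega]
      exact (hstep l h₁).1
    · omega
    · rw [show l + 1 - n = l - n + 1 by omega]
      exact (hstep (l - n) (by omega)).2
  · simp only [Function.comp_apply, δ]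
    rw [if_neg (by omega), if_pos (by omega), show 2 * n - n = n by omega, hend, rev_rev]
  · simp only [Function.comp_apply, δ]
    rw [if_pos hl, if_neg (by omega), Nat.add_sub_cancel]
    exact hrung _

end Ladder

section Sym2Family

variable {e : ι → Sym2 W}

noncomputable def tail (e : ι → Sym2 W) (x : ι × Bool) : W :=
  if x.2 then (e x.1).out.1 else (e x.1).out.2

lemma mk_tail_tail_rev (e : ι → Sym2 W) (x : ι × Bool) :
    s(tail e x, tail e (rev x)) = e x.1 := by
  obtain ⟨i, _ | _⟩ := x
  · rw [Sym2.eq_swap]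
    exact Quot.out_eq (e i)
  · exact Quot.out_eq (e i)

lemma tail_mem (e : ι → Sym2 W) (x : ι × Bool) : tail e x ∈ e x.1 :=
  mk_tail_tail_rev e x ▸ Sym2.mem_mk_left _ _

lemma tail_injective (hdiag : ∀ i, ¬ (e i).IsDiag)
    (hdisj : ∀ i j, i ≠ j → EdgeDisjoint (e i) (e j)) : Function.Injective (tail e) := by
  intro x y h
  by_cases hxy : x.1 = y.1
  · refine (eq_or_eq_rev hxy).resolve_right fun hrev => hdiag y.1 ?_
    rw [← mk_tail_tail_rev e y, Sym2.mk_isDiag_iff, ← h, hrev]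
  · exact absurd (h ▸ tail_mem e y) (hdisj _ _ hxy _ (tail_mem e x))

variable {G : SimpleGraph W}

lemma adj_tail_tail_rev (he : ∀ i, e i ∈ G.edgeSet) (x : ι × Bool) :
    G.Adj (tail e x) (tail e (rev x)) := by
  rw [← SimpleGraph.mem_edgeSet, mk_tail_tail_rev]
  exact he x.1

lemma compatible_or_of_oppC4 {x y : ι × Bool} (h : OppC4 G (e x.1) (e y.1)) :
    Compatible G (tail e) x y ∨ Compatible G (tail e) x (rev y) := by
  rw [← mk_tail_tail_rev e x, ← mk_tail_tail_rev e y] at h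
  simpa only [Compatible, rev_rev] using h.adj_and_adj_or

end Sym2Family

end OrientedEdge

theorem prismHK2_of_subgraph_in_Fgraph_general {V : Type*} (G : SimpleGraph V)
    (hG : IsPlanar G) (k : ℕ) (H : SimpleGraph (Fin k))
    (e : Fin k → Sym2 V) (he : ∀ i, e i ∈ G.edgeSet)
    (hdisj : ∀ i j, i ≠ j → EdgeDisjoint (e i) (e j))
    (hopp : ∀ i j, H.Adj i j → OppC4 G (e i) (e j)) :
    ∃ u v : Fin k → V,
      Function.Injective (Sum.elim u v) ∧
      (∀ i, e i = s(u i, v i)) ∧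
      (∀ i, G.Adj (u i) (v i)) ∧
      (∀ i j, H.Adj i j → G.Adj (u i) (u j) ∧ G.Adj (v i) (v j)) := by
  open OrientedEdge in
  have hinj := tail_injective (fun i => G.not_isDiag_of_mem_edgeSet (he i)) hdisj
  obtain ⟨σ, hσ⟩ := exists_compatible_orientation (H := H)
    (fun x y hxy => compatible_or_of_oppC4 (hopp _ _ hxy))
    (fun x hx => hG.2 (hasMinor_K33_of_reachable_rev hinj (adj_tail_tail_rev he) hx))
  exact ⟨fun i => tail e (i, σ i), fun i => tail e (rev (i, σ i)), injective_sum_elim hinj σ,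
    fun i => (mk_tail_tail_rev e (i, σ i)).symm, fun i => adj_tail_tail_rev he _, hσ⟩

theorem prismHK2_of_subgraph_in_Fgraph {V : Type*} [Fintype V] (G : SimpleGraph V)
    (hG : IsPlanar G) (k : ℕ) (hk : 2 ≤ k) (H : SimpleGraph (Fin k))
    (e : Fin k → Sym2 V) (he : ∀ i, e i ∈ G.edgeSet)
    (hdisj : ∀ i j, i ≠ j → EdgeDisjoint (e i) (e j))
    (hopp : ∀ i j, H.Adj i j → OppC4 G (e i) (e j)) :
    ∃ u v : Fin k → V,
      Function.Injective (Sum.elim u v) ∧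
      (∀ i, e i = s(u i, v i)) ∧
      (∀ i, G.Adj (u i) (v i)) ∧
      (∀ i j, H.Adj i j → G.Adj (u i) (u j) ∧ G.Adj (v i) (v j)) :=
  prismHK2_of_subgraph_in_Fgraph_general G hG k H e he hdisj hopp
end

section
/- The complete bipartite graph K_{2,Δ} with Δ ≥ 2 satisfies q_B(K_{2,Δ}) = 2Δ, i.e., in any B-coloring of K_{2,Δ} all edges must receive distinct colors. -/
open SimpleGraph

variable {V : Type*}

/-- Every edge of `K_{2,Δ}` is `s(inl a, inr i)`. -/
lemma mem_edge_char' {Δ : ℕ} (e : Sym2 (Fin 2 ⊕ Fin Δ))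
    (he : e ∈ (completeBipartiteGraph (Fin 2) (Fin Δ)).edgeSet) :
    ∃ a i, e = s(Sum.inl a, Sum.inr i) := by
  induction e using Sym2.ind with
  | _ u v =>
    rw [SimpleGraph.mem_edgeSet] at he
    cases u with
    | inl a => cases v with
      | inl b => simp at he
      | inr i => exact ⟨a, i, rfl⟩
    | inr i => cases v with
      | inl a => exact ⟨a, i, Sym2.eq_swap⟩
      | inr j => simp at he

lemma adj_li' {Δ : ℕ} (a : Fin 2) (i : Fin Δ) :
    (completeBipartiteGraph (Fin 2) (Fin Δ)).Adj (Sum.inl a) (Sum.inr i) := by simp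

/-- Any B-coloring of `K_{2,Δ}` is injective on edges. -/
lemma key' {Δ : ℕ} {α : Type*} (C : Sym2 (Fin 2 ⊕ Fin Δ) → α)
    (hC : IsBColoring (completeBipartiteGraph (Fin 2) (Fin Δ)) C) :
    ∀ e ∈ (completeBipartiteGraph (Fin 2) (Fin Δ)).edgeSet,
      ∀ f ∈ (completeBipartiteGraph (Fin 2) (Fin Δ)).edgeSet,
        C e = C f → e = f := by
  intro e he f hf hCef
  obtain ⟨a, i, rfl⟩ := mem_edge_char' e he
  obtain ⟨b, j, rfl⟩ := mem_edge_char' f hf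
  by_cases hab : a = b
  · subst hab
    by_cases hij : i = j
    · subst hij; rfl
    · exact absurd hCef (hC.1 (Sum.inl a) (Sum.inr i) (Sum.inr j) (adj_li' a i) (adj_li' a j)
        (by simpa using hij))
  · by_cases hij : i = j
    · subst hij
      have := hC.1 (Sum.inr i) (Sum.inl a) (Sum.inl b) (adj_li' a i).symm (adj_li' b i).symm
        (by simpa using hab)
      rw [Sym2.eq_swap (a := Sum.inr i), Sym2.eq_swap (a := Sum.inr i)] at this
      exact absurd hCef this
    · have hc4 : IsC4 (completeBipartiteGraph (Fin 2) (Fin Δ))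
          (Sum.inl a) (Sum.inr i) (Sum.inl b) (Sum.inr j) :=
        ⟨by simp, by simpa using hab, by simp, by simp, by simpa using hij, by simp,
          adj_li' a i, (adj_li' b i).symm, adj_li' b j, (adj_li' a j).symm⟩
      exact absurd hCef (hC.2 _ _ _ _ hc4).2.1

/-- Explicit coloring of `K_{2,Δ}` with `2Δ` colors. -/
def code' (Δ : ℕ) (hΔ : 2 ≤ Δ) : (Fin 2 ⊕ Fin Δ) → (Fin 2 ⊕ Fin Δ) → Fin (2 * Δ)
  | Sum.inl a, Sum.inr j => ⟨2 * j.val + a.val, by have := j.2; have := a.2; omega⟩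
  | Sum.inr j, Sum.inl a => ⟨2 * j.val + a.val, by have := j.2; have := a.2; omega⟩
  | _, _ => ⟨0, by omega⟩

lemma code_symm' (Δ : ℕ) (hΔ : 2 ≤ Δ) : ∀ u v, code' Δ hΔ u v = code' Δ hΔ v u := by
  intro u v; cases u <;> cases v <;> rfl

noncomputable def Ccol' (Δ : ℕ) (hΔ : 2 ≤ Δ) : Sym2 (Fin 2 ⊕ Fin Δ) → Fin (2 * Δ) :=
  Sym2.lift ⟨code' Δ hΔ, code_symm' Δ hΔ⟩

lemma Ccol_inj' {Δ : ℕ} (hΔ : 2 ≤ Δ) :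
    ∀ e ∈ (completeBipartiteGraph (Fin 2) (Fin Δ)).edgeSet,
      ∀ f ∈ (completeBipartiteGraph (Fin 2) (Fin Δ)).edgeSet,
        Ccol' Δ hΔ e = Ccol' Δ hΔ f → e = f := by
  intro e he f hf h
  obtain ⟨a, i, rfl⟩ := mem_edge_char' e he
  obtain ⟨b, j, rfl⟩ := mem_edge_char' f hf
  simp only [Ccol', Sym2.lift_mk] at h
  have h' : 2 * i.val + a.val = 2 * j.val + b.val := congrArg Fin.val h
  have ha := a.2; have hb := b.2
  have : i.val = j.val ∧ a.val = b.val := by omega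
  have hi : i = j := Fin.ext this.1
  have haa : a = b := Fin.ext this.2
  subst hi; subst haa; rfl

/-- A coloring injective on edges is a B-coloring. -/
lemma bcoloring_of_inj' {W : Type*} {α : Type*} (G : SimpleGraph W) (C : Sym2 W → α)
    (h : ∀ e ∈ G.edgeSet, ∀ f ∈ G.edgeSet, C e = C f → e = f) : IsBColoring G C := by
  constructor
  · intro a b c hab hac hbc hcc
    have := h _ hab _ hac hcc
    rw [Sym2.eq_iff] at this
    rcases this with ⟨_, h2⟩ | ⟨h1, h2⟩
    · exact hbc h2
    · exact hbc (h2.trans h1)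
  · intro a b c d ⟨hab, hac, had, hbc, hbd, hcd, e1, e2, e3, e4⟩
    refine ⟨fun hh => ?_, fun hh => ?_, fun hh => ?_, fun hh => ?_, fun hh => ?_, fun hh => ?_⟩ <;>
    · first
      | (have := h _ e1 _ e2 hh; rw [Sym2.eq_iff] at this; tauto)
      | (have := h _ e1 _ e3 hh; rw [Sym2.eq_iff] at this; tauto)
      | (have := h _ e1 _ e4 hh; rw [Sym2.eq_iff] at this; tauto)
      | (have := h _ e2 _ e3 hh; rw [Sym2.eq_iff] at this; tauto)
      | (have := h _ e2 _ e4 hh; rw [Sym2.eq_iff] at this; tauto)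
      | (have := h _ e3 _ e4 hh; rw [Sym2.eq_iff] at this; tauto)


theorem qB_completeBipartite_two {Δ : ℕ} (hΔ : 2 ≤ Δ) :
    qB (completeBipartiteGraph (Fin 2) (Fin Δ)) = 2 * Δ ∧
    ∀ (α : Type) (C : Sym2 (Fin 2 ⊕ Fin Δ) → α),
      IsBColoring (completeBipartiteGraph (Fin 2) (Fin Δ)) C →
      ∀ e ∈ (completeBipartiteGraph (Fin 2) (Fin Δ)).edgeSet,
        ∀ f ∈ (completeBipartiteGraph (Fin 2) (Fin Δ)).edgeSet,
          C e = C f → e = f := by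
  have hmem : (2 * Δ) ∈ {n | ∃ C : Sym2 (Fin 2 ⊕ Fin Δ) → Fin n,
      IsBColoring (completeBipartiteGraph (Fin 2) (Fin Δ)) C} :=
    ⟨Ccol' Δ hΔ, bcoloring_of_inj' _ _ (Ccol_inj' hΔ)⟩
  constructor
  · refine le_antisymm (Nat.sInf_le hmem) (le_csInf ⟨_, hmem⟩ ?_)
    rintro n ⟨C, hC⟩
    have hg : Function.Injective (fun p : Fin 2 × Fin Δ => C s(Sum.inl p.1, Sum.inr p.2)) := by
      rintro ⟨a, i⟩ ⟨b, j⟩ hpq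
      have := key' C hC _ (adj_li' a i) _ (adj_li' b j) hpq
      rw [Sym2.eq_iff] at this
      simp only [Sum.inl.injEq, Sum.inr.injEq] at this
      rcases this with ⟨h1, h2⟩ | ⟨h1, h2⟩
      · exact Prod.ext h1 h2
      · exact absurd h1 (by simp)
    have := Fintype.card_le_of_injective _ hg
    simpa using this
  · intro α C hC
    exact key' C hC
end

section
/- Let G be the graph obtained from K_6 by deleting a perfect matching. Then in any B-coloring of G all 12 edges must receive distinct colors; consequently q_B(G) = 12 = 2Δ(G) + 4. -/
open SimpleGraph

variable {V : Type*}

-- Auxiliary material -------------------------------------------------------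

instance : DecidableRel K6mM.Adj := fun x y =>
  decidable_of_iff' _ (SimpleGraph.fromRel_adj _ x y)

lemma K6mM_dich : ∀ a b c d : Fin 6, K6mM.Adj a b → K6mM.Adj c d →
    a ≠ c → a ≠ d → b ≠ c → b ≠ d →
    (K6mM.Adj a c ∧ K6mM.Adj b d) ∨ (K6mM.Adj a d ∧ K6mM.Adj b c) := by decide

/-- Key lemma: in any B-coloring of `K6mM`, distinct edges get distinct colors. -/
lemma K6mM_key {α : Type} (C : Sym2 (Fin 6) → α) (h : IsBColoring K6mM C)
    (a b c d : Fin 6) (hab : K6mM.Adj a b) (hcd : K6mM.Adj c d)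
    (hne : s(a, b) ≠ s(c, d)) : C s(a, b) ≠ C s(c, d) := by
  obtain ⟨hp, hc4⟩ := h
  by_cases hac : a = c
  · subst hac
    have hbd : b ≠ d := fun hh => hne (by rw [hh])
    exact hp a b d hab hcd hbd
  by_cases had : a = d
  · subst had
    have hbc : b ≠ c := by rintro rfl; exact hne Sym2.eq_swap.symm
    rw [show s(c, a) = s(a, c) from Sym2.eq_swap]
    exact hp a b c hab hcd.symm hbc
  by_cases hbc : b = c
  · subst hbc
    rw [show s(a, b) = s(b, a) from Sym2.eq_swap]
    exact hp b a d hab.symm hcd had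
  by_cases hbd : b = d
  · subst hbd
    rw [show s(a, b) = s(b, a) from Sym2.eq_swap,
        show s(c, b) = s(b, c) from Sym2.eq_swap]
    exact hp b a c hab.symm hcd.symm hac
  · rcases K6mM_dich a b c d hab hcd hac had hbc hbd with ⟨h1, h2⟩ | ⟨h1, h2⟩
    · have hC : IsC4 K6mM a b d c :=
        ⟨hab.ne, had, hac, hbd, hbc, fun hh => hcd.ne hh.symm, hab, h2, hcd.symm, h1.symm⟩
      have := (hc4 a b d c hC).2.1
      rwa [show s(d, c) = s(c, d) from Sym2.eq_swap] at this
    · have hC : IsC4 K6mM a b c d :=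
        ⟨hab.ne, hac, had, hbc, hbd, hcd.ne, hab, h2, hcd, h1.symm⟩
      exact (hc4 a b c d hC).2.1

def codeN : ℕ → ℕ → ℕ
  | 0, 2 => 0 | 0, 3 => 1 | 0, 4 => 2 | 0, 5 => 3
  | 1, 2 => 4 | 1, 3 => 5 | 1, 4 => 6 | 1, 5 => 7
  | 2, 4 => 8 | 2, 5 => 9 | 3, 4 => 10 | 3, 5 => 11
  | _, _ => 0

def ecol (x y : Fin 6) : Fin 12 :=
  ⟨codeN (min x.val y.val) (max x.val y.val) % 12, Nat.mod_lt _ (by norm_num)⟩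

def C12 : Sym2 (Fin 6) → Fin 12 :=
  Sym2.lift ⟨ecol, fun x y => by simp [ecol, Nat.min_comm, Nat.max_comm]⟩

lemma C12_mk (a b : Fin 6) : C12 s(a, b) = ecol a b := rfl

lemma ecol_inj : ∀ a b c d : Fin 6, K6mM.Adj a b → K6mM.Adj c d →
    ecol a b = ecol c d → (a = c ∧ b = d) ∨ (a = d ∧ b = c) := by decide

def edgeV : Fin 12 → Fin 6 × Fin 6
  | 0 => (0, 2) | 1 => (0, 3) | 2 => (0, 4) | 3 => (0, 5)
  | 4 => (1, 2) | 5 => (1, 3) | 6 => (1, 4) | 7 => (1, 5)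
  | 8 => (2, 4) | 9 => (2, 5) | 10 => (3, 4) | 11 => (3, 5)

lemma edgeV_adj : ∀ i : Fin 12, K6mM.Adj (edgeV i).1 (edgeV i).2 := by decide

lemma edgeV_ne : ∀ i j : Fin 12, i ≠ j →
    ¬(((edgeV i).1 = (edgeV j).1 ∧ (edgeV i).2 = (edgeV j).2) ∨
      ((edgeV i).1 = (edgeV j).2 ∧ (edgeV i).2 = (edgeV j).1)) := by decide

lemma C12_isB : IsBColoring K6mM C12 := by
  constructor
  · intro a b c hab hac hbc h
    rw [C12_mk, C12_mk] at h
    rcases ecol_inj a b a c hab hac h with ⟨_, h2⟩ | ⟨h1, _⟩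
    exacts [hbc h2, hac.ne h1]
  · rintro a b c d ⟨hab, hac, had, hbc, hbd, hcd, Aab, Abc, Acd, Ada⟩
    refine ⟨fun h => ?_, fun h => ?_, fun h => ?_, fun h => ?_, fun h => ?_, fun h => ?_⟩ <;>
      rw [C12_mk, C12_mk] at h
    · rcases ecol_inj a b b c Aab Abc h with ⟨h1, _⟩ | ⟨h1, _⟩
      exacts [hab h1, hac h1]
    · rcases ecol_inj a b c d Aab Acd h with ⟨h1, _⟩ | ⟨h1, _⟩
      exacts [hac h1, had h1]
    · rcases ecol_inj a b d a Aab Ada h with ⟨h1, _⟩ | ⟨_, h2⟩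
      exacts [had h1, hbd h2]
    · rcases ecol_inj b c c d Abc Acd h with ⟨h1, _⟩ | ⟨h1, _⟩
      exacts [hbc h1, hbd h1]
    · rcases ecol_inj b c d a Abc Ada h with ⟨h1, _⟩ | ⟨_, h2⟩
      exacts [hbd h1, hcd h2]
    · rcases ecol_inj c d d a Acd Ada h with ⟨h1, _⟩ | ⟨h1, _⟩
      exacts [hcd h1, hac h1.symm]

theorem qB_K6_minus_matching :
    (∀ (α : Type) (C : Sym2 (Fin 6) → α), IsBColoring K6mM C →
      ∀ e ∈ K6mM.edgeSet, ∀ f ∈ K6mM.edgeSet, C e = C f → e = f) ∧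
    qB K6mM = 12 := by
  have part1 : ∀ (α : Type) (C : Sym2 (Fin 6) → α), IsBColoring K6mM C →
      ∀ e ∈ K6mM.edgeSet, ∀ f ∈ K6mM.edgeSet, C e = C f → e = f := by
    intro α C hC e he f hf hCef
    by_contra hne
    induction e using Sym2.ind with
    | _ a b =>
      induction f using Sym2.ind with
      | _ c d =>
        exact K6mM_key C hC a b c d ((SimpleGraph.mem_edgeSet K6mM).mp he)
          ((SimpleGraph.mem_edgeSet K6mM).mp hf) hne hCef
  refine ⟨part1, ?_⟩
  have hmem : (12 : ℕ) ∈ {n | ∃ C : Sym2 (Fin 6) → Fin n, IsBColoring K6mM C} :=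
    ⟨C12, C12_isB⟩
  refine le_antisymm (Nat.sInf_le hmem) (le_csInf ⟨12, hmem⟩ ?_)
  rintro n ⟨C, hC⟩
  have hinj : Function.Injective (fun i : Fin 12 => C s((edgeV i).1, (edgeV i).2)) := by
    intro i j hij
    by_contra hne
    have hein : ∀ k : Fin 12, s((edgeV k).1, (edgeV k).2) ∈ K6mM.edgeSet :=
      fun k => (SimpleGraph.mem_edgeSet K6mM).mpr (edgeV_adj k)
    have := part1 (Fin n) C hC _ (hein i) _ (hein j) hij
    exact edgeV_ne i j hne (Sym2.eq_iff.mp this)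
  simpa using Fintype.card_le_of_injective _ hinj
end

section
/- Let G be a bipartite planar graph and let M be a matching in G. Then the subgraph of F(G) induced by the edges of M is bipartite. -/
/-!
Suppose `F(G)` restricted to a matching has an odd cycle `e₀ e₁ … e_{m-1}`, and colour `G` black
and white. Matching edges that are opposite in a 4-cycle are joined crosswise, black end to white
end. So if `R_p` is the end of `e_{p mod m}` of colour `p mod 2`, then `R₀ R₁ … R_{2m-1}` is a
closed walk in `G`; as `m` is odd it visits both ends of every `e_i`, and the `e_i` become the
rungs `R_p R_{p+m}` of a Möbius ladder. A Möbius ladder with at least three rungs has a `K₃,₃`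
minor, which a planar graph does not have.
-/

open SimpleGraph

variable {V : Type*}

namespace SimpleGraph

variable {W : Type*} {H : SimpleGraph W}

/-- A closed walk of length `n` in `H`, unrolled into an `n`-periodic sequence of vertices. -/
def IsPeriodicWalk (H : SimpleGraph W) (f : ℕ → W) (n : ℕ) : Prop :=
  Function.Periodic f n ∧ ∀ i, H.Adj (f i) (f (i + 1))

lemma isPeriodicWalk_mod {g : ℕ → W} {n : ℕ} (hn : 0 < n)
    (hadj : ∀ i < n, H.Adj (g i) (g (i + 1))) (hclose : g n = g 0) :
    H.IsPeriodicWalk (fun i => g (i % n)) n := by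
  refine ⟨fun i => by simp only [Nat.add_mod_right], fun i => ?_⟩
  have hi : i % n < n := Nat.mod_lt i hn
  change H.Adj (g (i % n)) (g ((i + 1) % n))
  rw [← Nat.mod_add_mod]
  rcases Nat.lt_or_ge (i % n + 1) n with hlt | hge
  · rw [Nat.mod_eq_of_lt hlt]
    exact hadj _ hi
  · have heq : i % n + 1 = n := by omega
    simpa only [heq, Nat.mod_self, ← hclose] using hadj _ hi

lemma IsPeriodicWalk.three_le {f : ℕ → W} {n : ℕ} (hf : H.IsPeriodicWalk f n) (hn : Odd n) :
    3 ≤ n := by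
  by_contra h
  obtain rfl : n = 1 := by obtain ⟨k, rfl⟩ := hn; omega
  exact (hf.1 0 ▸ hf.2 0).ne rfl

lemma IsPeriodicWalk.exists_injOn {f : ℕ → W} {n : ℕ} (hf : H.IsPeriodicWalk f n)
    (hn : Odd n) :
    ∃ (g : ℕ → W) (m : ℕ), Odd m ∧ H.IsPeriodicWalk g m ∧ Set.InjOn g (Set.Iio m) := by
  induction n using Nat.strong_induction_on generalizing f with
  | _ n ih =>
  by_cases hinj : Set.InjOn f (Set.Iio n)
  · exact ⟨f, n, hn, hf, hinj⟩
  have restart : ∀ a m, 0 < m → f (a + m) = f a →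
      H.IsPeriodicWalk (fun k => f (a + k % m)) m := fun a m hm h =>
    isPeriodicWalk_mod (g := fun k => f (a + k)) hm (fun k _ => hf.2 (a + k)) (by simpa using h)
  -- A repeated vertex `f i = f j` splits the walk into closed walks of lengths `j - i` and
  -- `n - (j - i)`, one of which is odd.
  have split : ∀ i j, i < j → j < n → f i = f j →
      ∃ (g : ℕ → W) (m : ℕ), Odd m ∧ H.IsPeriodicWalk g m ∧ Set.InjOn g (Set.Iio m) := by
    intro i j hij hjn hfij
    rcases Nat.even_or_odd (j - i) with heven | hodd
    · have hodd : Odd (n - (j - i)) := by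
        rw [Nat.odd_iff] at hn ⊢
        rw [Nat.even_iff] at heven
        omega
      refine ih _ (by omega) (restart j _ (by omega) ?_) hodd
      rw [show j + (n - (j - i)) = i + n by omega, hf.1, hfij]
    · refine ih _ (by omega) (restart i _ (by omega) ?_) hodd
      rw [show i + (j - i) = j by omega, hfij]
  simp only [Set.InjOn, Set.mem_Iio, not_forall] at hinj
  obtain ⟨i, hi, j, hj, hfij, hne⟩ := hinj
  rcases Nat.lt_or_gt_of_ne hne with h | h
  · exact split i j h hj hfij
  · exact split j i h hi hfij.symm

lemma exists_isPeriodicWalk_of_not_colorable_two (h : ¬ H.Colorable 2) :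
    ∃ (f : ℕ → W) (n : ℕ), Odd n ∧ H.IsPeriodicWalk f n := by
  simp only [two_colorable_iff_forall_loop_even, not_forall, Nat.not_even_iff_odd] at h
  obtain ⟨u, w, hw⟩ := h
  exact ⟨_, _, hw, isPeriodicWalk_mod (g := w.getVert) hw.pos (fun i hi => w.adj_getVert_succ hi)
    (by rw [Walk.getVert_length, Walk.getVert_zero])⟩

end SimpleGraph

section MoebiusLadder

variable {G : SimpleGraph V}

lemma connected_induce_image_Icc {R : ℕ → V} {a b : ℕ} (hab : a ≤ b)
    (hadj : ∀ p, a ≤ p → p < b → G.Adj (R p) (R (p + 1))) :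
    (G.induce (R '' Set.Icc a b)).Connected := by
  have hmem : ∀ p, a ≤ p → p ≤ b → R p ∈ R '' Set.Icc a b := fun p h₁ h₂ => ⟨p, ⟨h₁, h₂⟩, rfl⟩
  have hreach : ∀ p (h₁ : a ≤ p) (h₂ : p ≤ b),
      (G.induce (R '' Set.Icc a b)).Reachable ⟨R a, hmem a le_rfl hab⟩ ⟨R p, hmem p h₁ h₂⟩ := by
    intro p h₁ h₂
    induction p, h₁ using Nat.le_induction with
    | base => rfl
    | succ p hp ih =>
      exact (ih (by omega)).trans (Adj.reachable (by simp [hadj p hp (by omega)]))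
  rw [connected_iff]
  refine ⟨?_, ⟨⟨R a, hmem a le_rfl hab⟩⟩⟩
  rintro ⟨_, p, hp, rfl⟩ ⟨_, q, hq, rfl⟩
  exact (hreach p hp.1 hp.2).symm.trans (hreach q hq.1 hq.2)

/-- Index intervals along the rim `R 0, …, R (2n - 1)` of a Möbius ladder with `n` rungs whose
images are the branch sets of a `K₃,₃` minor. -/
def moebiusK33Branch (n : ℕ) : Fin 3 ⊕ Fin 3 → ℕ × ℕ
  | .inl 0 => (0, 0)
  | .inl 1 => (2, 2)
  | .inl 2 => (n + 1, n + 1)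
  | .inr 0 => (1, 1)
  | .inr 1 => (3, n)
  | .inr 2 => (n + 2, 2 * n - 1)

theorem hasMinor_K33_of_moebiusLadder {R : ℕ → V} {n : ℕ} (hn : 3 ≤ n)
    (hinj : Set.InjOn R (Set.Iio (2 * n))) (hper : Function.Periodic R (2 * n))
    (hrim : ∀ p, G.Adj (R p) (R (p + 1))) (hrung : ∀ p, G.Adj (R p) (R (p + n))) :
    HasMinor G (completeBipartiteGraph (Fin 3) (Fin 3)) := by
  set I := moebiusK33Branch n
  have hI : ∀ w, (I w).1 ≤ (I w).2 ∧ (I w).2 < 2 * n := by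
    rintro (i | i) <;> fin_cases i <;> simp only [I, moebiusK33Branch] <;> omega
  have hsep : ∀ w₁ w₂, w₁ ≠ w₂ → (I w₁).2 < (I w₂).1 ∨ (I w₂).2 < (I w₁).1 := by
    rintro (i | i) (j | j) hne <;> fin_cases i <;> fin_cases j <;>
      simp only [I, moebiusK33Branch] <;> first | exact absurd rfl hne | omega
  have hclose : G.Adj (R (2 * n - 1)) (R 0) := by
    have h := hrim (2 * n - 1)
    rwa [Nat.sub_add_cancel (by omega), hper.eq] at h
  have hcross : ∀ i j : Fin 3, ∃ p ∈ Set.Icc (I (.inl i)).1 (I (.inl i)).2,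
      ∃ q ∈ Set.Icc (I (.inr j)).1 (I (.inr j)).2, G.Adj (R p) (R q) := by
    intro i j
    fin_cases i <;> fin_cases j <;> simp only [I, moebiusK33Branch, Set.mem_Icc]
    · exact ⟨0, by omega, 1, by omega, hrim 0⟩
    · exact ⟨0, by omega, n, by omega, by simpa using hrung 0⟩
    · exact ⟨0, by omega, 2 * n - 1, by omega, hclose.symm⟩
    · exact ⟨2, by omega, 1, by omega, (hrim 1).symm⟩
    · exact ⟨2, by omega, 3, by omega, hrim 2⟩
    · exact ⟨2, by omega, n + 2, by omega, by simpa [add_comm] using hrung 2⟩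
    · exact ⟨n + 1, by omega, 1, by omega, by simpa [add_comm] using (hrung 1).symm⟩
    · exact ⟨n + 1, by omega, n, by omega, (hrim n).symm⟩
    · exact ⟨n + 1, by omega, n + 2, by omega, hrim (n + 1)⟩
  refine ⟨fun w => R '' Set.Icc (I w).1 (I w).2,
    fun w => connected_induce_image_Icc (hI w).1 fun p _ _ => hrim p, ?_, ?_⟩
  · intro w₁ w₂ hne
    rw [Set.disjoint_left]
    rintro _ ⟨p, hp, rfl⟩ ⟨q, hq, hqp⟩
    rw [Set.mem_Icc] at hp hq
    have h₁ := hI w₁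
    have h₂ := hI w₂
    have := hinj (Set.mem_Iio.2 (by omega)) (Set.mem_Iio.2 (by omega)) hqp
    rcases hsep w₁ w₂ hne with h | h <;> omega
  · rintro (i | i) (j | j) hadj
    · simp at hadj
    · obtain ⟨p, hp, q, hq, h⟩ := hcross i j
      exact ⟨_, ⟨p, hp, rfl⟩, _, ⟨q, hq, rfl⟩, h⟩
    · obtain ⟨p, hp, q, hq, h⟩ := hcross j i
      exact ⟨_, ⟨q, hq, rfl⟩, _, ⟨p, hp, rfl⟩, h.symm⟩
    · simp at hadj

end MoebiusLadder

namespace SimpleGraph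

variable {G : SimpleGraph V}

lemma adj_of_mem_edgeSet {e : Sym2 V} (he : e ∈ G.edgeSet) {x y : V} (hx : x ∈ e) (hy : y ∈ e)
    (hxy : x ≠ y) : G.Adj x y := by
  rwa [(Sym2.mem_and_mem_iff hxy).1 ⟨hx, hy⟩] at he

namespace Coloring

variable (col : G.Coloring (Fin 2))

lemma eq_of_adj_of_adj {a b c : V} (hab : G.Adj a b) (hbc : G.Adj b c) : col a = col c := by
  have h₁ := col.valid hab
  have h₂ := col.valid hbc
  omega

lemma eq_of_mem_edgeSet {e : Sym2 V} (he : e ∈ G.edgeSet) {x y : V} (hx : x ∈ e) (hy : y ∈ e)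
    (hxy : col x = col y) : x = y := by
  by_contra hne
  exact col.valid (adj_of_mem_edgeSet he hx hy hne) hxy

lemma exists_mem_eq {e : Sym2 V} (he : e ∈ G.edgeSet) (k : Fin 2) : ∃ v ∈ e, col v = k := by
  induction e with
  | _ a b =>
    have hab : col a ≠ col b := col.valid he
    by_cases ha : col a = k
    · exact ⟨a, Sym2.mem_mk_left a b, ha⟩
    · exact ⟨b, Sym2.mem_mk_right a b, by omega⟩

lemma adj_of_oppC4 {e f : Sym2 V} (h : OppC4 G e f) {x y : V} (hx : x ∈ e) (hy : y ∈ f)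
    (hxy : col x ≠ col y) : G.Adj x y := by
  obtain ⟨a, b, c, d, ⟨-, -, -, -, -, -, hab, hbc, hcd, hda⟩, rfl, rfl⟩ := h
  rw [Sym2.mem_iff] at hx hy
  rcases hx with rfl | rfl <;> rcases hy with rfl | rfl
  · exact absurd (col.eq_of_adj_of_adj hab hbc) hxy
  · exact hda.symm
  · exact hbc
  · exact absurd (col.eq_of_adj_of_adj hbc hcd) hxy

end Coloring

end SimpleGraph

theorem exists_moebiusLadder {G : SimpleGraph V} (hG : G.Colorable 2) {E : ℕ → Sym2 V} {m : ℕ}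
    (hm : Odd m) (hE : ∀ i, E i ∈ G.edgeSet) (hper : Function.Periodic E m)
    (hopp : ∀ i, OppC4 G (E i) (E (i + 1)) ∨ OppC4 G (E (i + 1)) (E i))
    (hdisj : ∀ i < m, ∀ j < m, i ≠ j → EdgeDisjoint (E i) (E j)) :
    ∃ R : ℕ → V, Set.InjOn R (Set.Iio (2 * m)) ∧ Function.Periodic R (2 * m) ∧
      (∀ p, G.Adj (R p) (R (p + 1))) ∧ ∀ p, G.Adj (R p) (R (p + m)) := by
  obtain ⟨col⟩ := hG
  choose R hRmem hRcol using
    fun p : ℕ => col.exists_mem_eq (hE p) ⟨p % 2, Nat.mod_lt p two_pos⟩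
  have hcol : ∀ p q, col (R p) = col (R q) ↔ p % 2 = q % 2 := by
    intro p q
    rw [hRcol, hRcol, Fin.ext_iff]
  have hm₂ : m % 2 = 1 := Nat.odd_iff.1 hm
  refine ⟨R, fun p hp q hq hpq => ?_, fun p => ?_, fun p => ?_, fun p => ?_⟩
  · have hpq₂ : p % 2 = q % 2 := (hcol p q).1 (congrArg col hpq)
    have hpqm : p % m = q % m := by
      by_contra hne
      refine hdisj _ (Nat.mod_lt _ hm.pos) _ (Nat.mod_lt _ hm.pos) hne (R p) ?_ ?_
      · exact hper.map_mod_nat p ▸ hRmem p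
      · exact hper.map_mod_nat q ▸ hpq ▸ hRmem q
    exact ((Nat.modEq_and_modEq_iff_modEq_mul (Nat.coprime_two_left.2 hm)).1
      ⟨hpq₂, hpqm⟩).eq_of_lt_of_lt hp hq
  · refine col.eq_of_mem_edgeSet (hE p) ?_ (hRmem p) ((hcol _ _).2 (by omega))
    simpa using (hper.nat_mul 2) p ▸ hRmem (p + 2 * m)
  · have hxy : col (R p) ≠ col (R (p + 1)) := by rw [Ne, hcol]; omega
    rcases hopp p with h | h
    · exact col.adj_of_oppC4 h (hRmem p) (hRmem (p + 1)) hxy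
    · exact (col.adj_of_oppC4 h (hRmem (p + 1)) (hRmem p) (Ne.symm hxy)).symm
  · refine adj_of_mem_edgeSet (hE p) (hRmem p) (hper p ▸ hRmem (p + m)) fun h => ?_
    have := (hcol _ _).1 (congrArg col h)
    omega

theorem Fgraph_matching_bipartite_general {V : Type*} (G : SimpleGraph V)
    (hG : IsPlanar G) (hbip : G.Colorable 2) (M : Set (Sym2 V))
    (hmatch : ∀ e ∈ M, ∀ f ∈ M, e ≠ f → EdgeDisjoint e f) :
    ((Fgraph G).induce {e : G.edgeSet | (e : Sym2 V) ∈ M}).Colorable 2 := by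
  by_contra hodd
  obtain ⟨f, n, hn, hf⟩ := exists_isPeriodicWalk_of_not_colorable_two hodd
  obtain ⟨g, m, hm, hg, hinj⟩ := hf.exists_injOn hn
  let E : ℕ → Sym2 V := fun i => (g i : G.edgeSet)
  have hopp : ∀ i, OppC4 G (E i) (E (i + 1)) ∨ OppC4 G (E (i + 1)) (E i) := fun i =>
    ((fromRel_adj _ _ _).1 (comap_adj.1 (hg.2 i))).2.imp And.right And.right
  have hdisj : ∀ i < m, ∀ j < m, i ≠ j → EdgeDisjoint (E i) (E j) := fun i hi j hj hij =>
    hmatch _ (g i).2 _ (g j).2 fun h => hij (hinj hi hj (Subtype.ext (Subtype.ext h)))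
  obtain ⟨R, hRinj, hRper, hrim, hrung⟩ := exists_moebiusLadder hbip hm (fun i => (g i).1.2)
    (fun i => congrArg (fun e => e.1.1) (hg.1 i)) hopp hdisj
  exact hG.2 (hasMinor_K33_of_moebiusLadder (hg.three_le hm) hRinj hRper hrim hrung)

theorem Fgraph_matching_bipartite {V : Type*} [Fintype V] (G : SimpleGraph V)
    (hG : IsPlanar G) (hbip : G.Colorable 2) (M : Set (Sym2 V)) (hM : M ⊆ G.edgeSet)
    (hmatch : ∀ e ∈ M, ∀ f ∈ M, e ≠ f → EdgeDisjoint e f) :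
    ((Fgraph G).induce {e : G.edgeSet | (e : Sym2 V) ∈ M}).Colorable 2 :=
  Fgraph_matching_bipartite_general G hG hbip M hmatch
end

section
/- Let G be the outerplanar graph consisting of a path on 4 vertices v_1 v_2 v_3 v_4 together with a fifth vertex u adjacent to all of v_1, v_2, v_3, v_4. Then q_B(G) = 5 = Δ(G) + 1. -/
open SimpleGraph

variable {V : Type*}

/-! ### Auxiliary material for `qB_fanGraph` -/

instance FanGraph.adjDecidable : DecidableRel FanGraph.Adj := fun a b =>
  decidable_of_iff _ (SimpleGraph.fromRel_adj _ a b).symm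

/-- An explicit B-coloring of the fan graph with 5 colors. -/
def fanCol (e : Sym2 (Fin 5)) : Fin 5 :=
  if e = s(0,1) then 3 else if e = s(1,2) then 4 else if e = s(2,3) then 0
  else if e = s(4,0) then 0 else if e = s(4,1) then 1 else if e = s(4,2) then 2 else 3

lemma fanCol_isBColoring : IsBColoring FanGraph fanCol := by
  constructor
  · decide
  · unfold IsC4; decide

lemma fin4_pigeonhole : ∀ a0 a1 a2 a3 t : Fin 4, a0 ≠ a1 → a0 ≠ a2 → a0 ≠ a3 →
    a1 ≠ a2 → a1 ≠ a3 → a2 ≠ a3 → t ≠ a0 → t ≠ a1 → t ≠ a2 → t ≠ a3 → False := by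
  decide

lemma no_bcoloring_four (C : Sym2 (Fin 5) → Fin 4) : ¬ IsBColoring FanGraph C := by
  rintro ⟨hp, hc⟩
  have hC1 : IsC4 FanGraph 0 1 2 4 := by unfold IsC4; decide
  have hC2 : IsC4 FanGraph 1 2 3 4 := by unfold IsC4; decide
  have h1 := hc 0 1 2 4 hC1
  have h2 := hc 1 2 3 4 hC2
  have e24 : s((2:Fin 5),(4:Fin 5)) = s(4,2) := Sym2.eq_swap
  have e34 : s((3:Fin 5),(4:Fin 5)) = s(4,3) := Sym2.eq_swap
  have a40 : FanGraph.Adj 4 0 := by decide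
  have a41 : FanGraph.Adj 4 1 := by decide
  have a42 : FanGraph.Adj 4 2 := by decide
  have a43 : FanGraph.Adj 4 3 := by decide
  exact fin4_pigeonhole (C s(4,0)) (C s(4,1)) (C s(4,2)) (C s(4,3)) (C s(1,2))
    (hp 4 0 1 a40 a41 (by decide)) (hp 4 0 2 a40 a42 (by decide))
    (hp 4 0 3 a40 a43 (by decide)) (hp 4 1 2 a41 a42 (by decide))
    (hp 4 1 3 a41 a43 (by decide)) (hp 4 2 3 a42 a43 (by decide))
    h1.2.2.2.2.1 h2.2.2.1 (e24 ▸ h1.2.2.2.1) (e34 ▸ h2.2.1)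

theorem qB_fanGraph : qB FanGraph = 5 := by
  have h5 : 5 ∈ {n | ∃ C : Sym2 (Fin 5) → Fin n, IsBColoring FanGraph C} :=
    ⟨fanCol, fanCol_isBColoring⟩
  refine le_antisymm (Nat.sInf_le h5) (le_csInf ⟨5, h5⟩ ?_)
  rintro n ⟨C, hC⟩
  by_contra hlt
  push_neg at hlt
  have hn : n ≤ 4 := by omega
  have : IsBColoring FanGraph (fun e => (C e).castLE hn) := by
    obtain ⟨hp, hc⟩ := hC
    refine ⟨fun a b c hab hac hbc h => hp a b c hab hac hbc (Fin.castLE_injective hn h), ?_⟩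
    intro a b c d h4
    obtain ⟨x1, x2, x3, x4, x5, x6⟩ := hc a b c d h4
    exact ⟨fun h => x1 (Fin.castLE_injective hn h), fun h => x2 (Fin.castLE_injective hn h),
      fun h => x3 (Fin.castLE_injective hn h), fun h => x4 (Fin.castLE_injective hn h),
      fun h => x5 (Fin.castLE_injective hn h), fun h => x6 (Fin.castLE_injective hn h)⟩
  exact no_bcoloring_four _ this
end
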